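/- Let P = (X, ≤) be an N-free poset whose comparability graph is connected. Then there exists x ∈ X with C_x nonempty if and only if P is a linear sum of at least two nonempty parts, i.e., there exists a nonempty proper subset A of X such that every element of A is strictly below every element of X \ A. -/

import Mathlib

/-- `(a,b,c,d)` is an `N` in the poset: the four elements are distinct, `a < b`, `c < b`,
`c < d`, and these are the only comparabilities among them. -/
def IsN {X : Type*} [PartialOrder X] (a b c d : X) : Prop :=
  a ≠ b ∧ a ≠ c ∧ a ≠ d ∧ b ≠ c ∧ b ≠ d ∧ c ≠ d ∧
  a < b ∧ c < b ∧ c < d ∧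
  (¬ a ≤ c ∧ ¬ c ≤ a) ∧ (¬ a ≤ d ∧ ¬ d ≤ a) ∧ (¬ b ≤ d ∧ ¬ d ≤ b)

/-- A poset is `N`-free if it contains no `N`. -/
def NFree (X : Type*) [PartialOrder X] : Prop :=
  ∀ a b c d : X, ¬ IsN a b c d

/-- `inc(x)`: the set of elements incomparable to `x`. -/
def incP {X : Type*} [PartialOrder X] (x : X) : Set X :=
  {y | ¬ x ≤ y ∧ ¬ y ≤ x}

/-- The comparability graph of a poset. -/
def compGraph (X : Type*) [PartialOrder X] : SimpleGraph X where
  Adj u v := u < v ∨ v < u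
  symm := ⟨by intro u v h; exact Or.symm h⟩
  loopless := ⟨by intro u h; rcases h with h | h <;> exact lt_irrefl u h⟩

/-- `A` is a module of the poset: every element outside `A` relates in the same way
to all elements of `A`. -/
def PModule {X : Type*} [PartialOrder X] (A : Set X) : Prop :=
  ∀ v ∉ A, ∀ a ∈ A, ∀ a' ∈ A, (v < a → v < a') ∧ (a < v → a' < v)

/-- `C⁺_x`: elements above `x` comparable to all elements of `inc(x)`. -/
def Cplus {X : Type*} [PartialOrder X] (x : X) : Set X :=
  {y | x < y ∧ ∀ z ∈ incP x, (y ≤ z ∨ z ≤ y)}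

/-- `C⁻_x`: elements below `x` comparable to all elements of `inc(x)`. -/
def Cminus {X : Type*} [PartialOrder X] (x : X) : Set X :=
  {y | y < x ∧ ∀ z ∈ incP x, (y ≤ z ∨ z ≤ y)}

/-- A poset is chain complete if every nonempty chain has a supremum and an infimum. -/
def ChainComplete (X : Type*) [PartialOrder X] : Prop :=
  ∀ C : Set X, C.Nonempty → IsChain (· ≤ ·) C → (∃ s, IsLUB C s) ∧ (∃ i, IsGLB C i)

/-!
If `y ∈ C⁻_x`, then `y` lies strictly below `x` and below all of `inc(x)`, so the set `A` of common
strict lower bounds of `{x} ∪ inc(x)` is nonempty and misses `x`. N-freeness forces `A` to lie below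
everything outside it: an element `b < x` outside `A` fails to be below some `w ∈ inc(x)`, and if
`a ∈ A` were not below `b`, then `b < x > a < w` would be an `N`. The case `C⁺_x ≠ ∅` is the order
dual. Conversely, if `A` is the lower part of a linear sum, `a ∈ A` and `b ∉ A`, then `inc(a) ⊆ A`
lies below `b`, so `b ∈ C⁺_a`.
-/

section

variable {X : Type*} [PartialOrder X]

open OrderDual

def IsLinearSumSplit (A : Set X) : Prop :=
  A.Nonempty ∧ A ≠ Set.univ ∧ ∀ a ∈ A, ∀ b ∉ A, a < b

theorem isN_of_lt_of_incomparable {a b c d : X} (hab : a < b) (hcb : c < b) (hcd : c < d)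
    (hac : ¬ a ≤ c ∧ ¬ c ≤ a) (had : ¬ a ≤ d ∧ ¬ d ≤ a) (hbd : ¬ b ≤ d ∧ ¬ d ≤ b) :
    IsN a b c d :=
  ⟨hab.ne, fun h => hac.1 h.le, fun h => had.1 h.le, hcb.ne', fun h => hbd.1 h.le, hcd.ne,
    hab, hcb, hcd, hac, had, hbd⟩

theorem IsN.ofDual {a b c d : Xᵒᵈ} (h : IsN a b c d) :
    IsN (ofDual d) (ofDual c) (ofDual b) (ofDual a) := by
  obtain ⟨-, -, -, -, -, -, hab, hcb, hcd, hac, had, hbd⟩ := h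
  exact isN_of_lt_of_incomparable hcd hcb hab hbd had hac

theorem NFree.dual (hN : NFree X) : NFree Xᵒᵈ :=
  fun _ _ _ _ h => hN _ _ _ _ h.ofDual

theorem toDual_mem_Cminus_toDual {x y : X} (hy : y ∈ Cplus x) :
    toDual y ∈ Cminus (toDual x) :=
  ⟨hy.1, fun z hz => (hy.2 (ofDual z) hz.symm).symm⟩

theorem IsLinearSumSplit.compl_preimage_toDual {A : Set Xᵒᵈ} (hA : IsLinearSumSplit A) :
    IsLinearSumSplit (toDual ⁻¹' A)ᶜ := by
  obtain ⟨⟨a, ha⟩, hA_ne, hlt⟩ := hA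
  refine ⟨Set.nonempty_compl.mpr hA_ne, ?_, fun b hb a ha => hlt a (not_not.mp ha) b hb⟩
  exact fun h => Set.eq_empty_iff_forall_notMem.mp (Set.compl_univ_iff.mp h) a ha

def lowerCore (x : X) : Set X :=
  {z | z < x ∧ ∀ w ∈ incP x, z < w}

theorem Cminus_subset_lowerCore (x : X) : Cminus x ⊆ lowerCore x := by
  rintro y ⟨hyx, hy⟩
  refine ⟨hyx, fun w hw => ?_⟩
  rcases hy w hw with hyw | hwy
  · exact hyw.lt_of_ne fun h => hw.2 (h ▸ hyx.le)
  · exact absurd (hwy.trans hyx.le) hw.2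

theorem NFree.lt_of_mem_lowerCore (hN : NFree X) {x a b : X} (ha : a ∈ lowerCore x)
    (hb : b ∉ lowerCore x) : a < b := by
  obtain ⟨hax, haw⟩ := ha
  by_cases hxb : x ≤ b
  · exact hax.trans_le hxb
  by_cases hbx : b ≤ x
  · have hbx : b < x := hbx.lt_of_ne fun h => hxb (h ▸ le_rfl)
    obtain ⟨w, hw, hbw⟩ : ∃ w ∈ incP x, ¬ b < w := by
      simpa only [lowerCore, Set.mem_ofPred_eq, hbx, true_and, not_forall, exists_prop] using hb
    by_contra hab
    have hbw' : ¬ b ≤ w := fun h => hbw (h.lt_of_ne fun h => hw.2 (h ▸ hbx.le))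
    refine hN b x a w (isN_of_lt_of_incomparable hbx hax (haw w hw) ⟨?_, ?_⟩ ⟨hbw', ?_⟩ hw)
    · exact fun h => hbw' (h.trans (haw w hw).le)
    · exact fun h => hab (h.lt_of_ne fun h => hbw (h ▸ haw w hw))
    · exact fun h => hw.2 (h.trans hbx.le)
  · exact haw b ⟨hxb, hbx⟩

theorem NFree.isLinearSumSplit_lowerCore (hN : NFree X) {x : X} (hx : (Cminus x).Nonempty) :
    IsLinearSumSplit (lowerCore x) :=
  ⟨hx.mono (Cminus_subset_lowerCore x), fun h => (h ▸ Set.mem_univ x : x ∈ lowerCore x).1.false,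
    fun _ ha _ hb => hN.lt_of_mem_lowerCore ha hb⟩

theorem NFree.exists_isLinearSumSplit_of_Cplus_nonempty (hN : NFree X) {x : X}
    (hx : (Cplus x).Nonempty) : ∃ A : Set X, IsLinearSumSplit A := by
  obtain ⟨y, hy⟩ := hx
  have hdual := hN.dual.isLinearSumSplit_lowerCore ⟨_, toDual_mem_Cminus_toDual hy⟩
  exact ⟨_, hdual.compl_preimage_toDual⟩

theorem IsLinearSumSplit.mem_Cplus {A : Set X} (hA : IsLinearSumSplit A) {a b : X} (ha : a ∈ A)
    (hb : b ∉ A) : b ∈ Cplus a := by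
  refine ⟨hA.2.2 a ha b hb, fun z hz => Or.inr (hA.2.2 z ?_ b hb).le⟩
  by_contra hzA
  exact hz.1 (hA.2.2 a ha z hzA).le

end

theorem exists_C_nonempty_iff_linear_sum_general
    {X : Type*} [PartialOrder X] (hN : NFree X) :
    (∃ x : X, (Cminus x ∪ Cplus x).Nonempty) ↔
      ∃ A : Set X, A.Nonempty ∧ A ≠ Set.univ ∧ ∀ a ∈ A, ∀ b ∉ A, a < b := by
  constructor
  · rintro ⟨x, y, hy | hy⟩
    · exact ⟨_, hN.isLinearSumSplit_lowerCore ⟨y, hy⟩⟩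
    · exact hN.exists_isLinearSumSplit_of_Cplus_nonempty ⟨y, hy⟩
  · rintro ⟨A, hA : IsLinearSumSplit A⟩
    obtain ⟨a, ha⟩ := hA.1
    obtain ⟨b, hb⟩ := (Set.ne_univ_iff_exists_notMem A).mp hA.2.1
    exact ⟨a, b, Or.inr (hA.mem_Cplus ha hb)⟩

theorem exists_C_nonempty_iff_linear_sum
    {X : Type*} [PartialOrder X] (hN : NFree X) (hconn : (compGraph X).Connected) :
    (∃ x : X, (Cminus x ∪ Cplus x).Nonempty) ↔
      ∃ A : Set X, A.Nonempty ∧ A ≠ Set.univ ∧ ∀ a ∈ A, ∀ b ∉ A, a < b :=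
  exists_C_nonempty_iff_linear_sum_general hN
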